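/- arXiv:1606.09079 — 4 statements merged into one kernel-verified Lean document; each statement's English description precedes it below -/
import Mathlib

section
/- Let A be a nonempty compact metric space and E, F metric spaces. A map Φ : A × E → F is continuous if and only if the Nemytskii operator N_Φ, defined by N_Φ(u) := (a ↦ Φ(a, u(a))), maps C^0(A, E) into C^0(A, F) and is continuous (where spaces of continuous functions carry the uniform metric). -/
/-- A map `Φ : A × E → F` (with `A` a nonempty compact metric space) is continuous
iff its Nemytskii operator maps `C(A,E)` into `C(A,F)` and is continuous for the
uniform metrics. -/
theorem stmt_4 {A E F : Type*} [MetricSpace A] [CompactSpace A] [Nonempty A]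
    [MetricSpace E] [MetricSpace F] (Φ : A × E → F) :
    Continuous Φ ↔
      ∃ N : C(A, E) → C(A, F), Continuous N ∧ ∀ (u : C(A, E)) (a : A), N u a = Φ (a, u a) := by
  constructor
  · intro hΦ
    refine ⟨fun u => (⟨Φ, hΦ⟩ : C(A × E, F)).comp ((ContinuousMap.id A).prodMk u),
      ?_, fun u a => rfl⟩
    have hlip : LipschitzWith 1 (fun u : C(A, E) => (ContinuousMap.id A).prodMk u) := by
      refine LipschitzWith.of_dist_le_mul fun u v => ?_
      rw [NNReal.coe_one, one_mul]
      refine ContinuousMap.dist_le dist_nonneg |>.mpr fun a => ?_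
      change dist (a, u a) (a, v a) ≤ dist u v
      rw [Prod.dist_eq]
      exact max_le (by simpa using (dist_nonneg : (0:ℝ) ≤ dist u v))
        (ContinuousMap.dist_apply_le_dist a)
    exact (ContinuousMap.continuous_postcomp _).comp hlip.continuous
  · rintro ⟨N, hN, hNe⟩
    have h : Φ = fun p : A × E => N (ContinuousMap.const A p.2) p.1 := by
      funext p; rw [hNe]; rfl
    rw [h]
    exact ContinuousEval.continuous_eval.comp
      ((hN.comp (ContinuousMap.continuous_const'.comp continuous_snd)).prodMk
        continuous_fst)
end

section
/- Dubois-Reymond lemma: Let α < β be reals and p, q ∈ C^0([α,β], ℝ^{n*}). If for every h ∈ C^1([α,β], ℝ^n) with h(α) = h(β) = 0 one has ∫_α^β (p(t)·h(t) + q(t)·h'(t)) dt = 0, then q is of class C^1 on [α,β] and q' = p. -/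
/-!
Let `P t = ∫_α^t p`. Integrating `p · h` by parts turns the hypothesis into `∫ (q - P) · h' = 0`
for every admissible `h`, so it suffices to show that a continuous `g` with `∫ g · h' = 0` for all
such `h` is constant. Testing with `h = φ • v` reduces this to scalar `g`, and there the choice
`φ t = ∫_α^t (g - c)`, with `c` the mean value of `g`, gives `∫ (g - c)² = 0`.
-/

open MeasureTheory Set

variable {E : Type*} [NormedAddCommGroup E] [NormedSpace ℝ E]

structure IsFixedEndpointVariation (a b : ℝ) (h h' : ℝ → E) : Prop where
  hasDerivWithinAt : ∀ t ∈ Icc a b, HasDerivWithinAt h (h' t) (Icc a b) t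
  continuousOn_deriv : ContinuousOn h' (Icc a b)
  left : h a = 0
  right : h b = 0

theorem IsFixedEndpointVariation.continuousOn {a b : ℝ} {h h' : ℝ → E}
    (hh : IsFixedEndpointVariation a b h h') : ContinuousOn h (Icc a b) :=
  fun t ht => (hh.hasDerivWithinAt t ht).continuousWithinAt

theorem IsFixedEndpointVariation.smul_const {a b : ℝ} {φ φ' : ℝ → ℝ}
    (hφ : IsFixedEndpointVariation a b φ φ') (v : E) :
    IsFixedEndpointVariation a b (fun t => φ t • v) (fun t => φ' t • v) where
  hasDerivWithinAt t ht := (hφ.hasDerivWithinAt t ht).smul_const v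
  continuousOn_deriv := hφ.continuousOn_deriv.smul continuousOn_const
  left := by simp [hφ.left]
  right := by simp [hφ.right]

theorem hasDerivWithinAt_integral_Icc [CompleteSpace E] {f : ℝ → E} {a b t : ℝ}
    (hf : ContinuousOn f (Icc a b)) (ht : t ∈ Icc a b) :
    HasDerivWithinAt (fun u => ∫ s in a..u, f s) (f t) (Icc a b) t := by
  have : Fact (t ∈ Icc a b) := ⟨ht⟩
  refine intervalIntegral.integral_hasDerivWithinAt_right ?_
    (hf.stronglyMeasurableAtFilter_nhdsWithin measurableSet_Icc t) (hf t ht)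
  exact (hf.mono (Icc_subset_Icc le_rfl ht.2)).intervalIntegrable_of_Icc ht.1

theorem integral_eq_sub_of_hasDerivWithinAt_Icc [CompleteSpace E] {f f' : ℝ → E} {a b : ℝ}
    (hab : a ≤ b) (hd : ∀ t ∈ Icc a b, HasDerivWithinAt f (f' t) (Icc a b) t)
    (hc : ContinuousOn f' (Icc a b)) :
    ∫ t in a..b, f' t = f b - f a :=
  intervalIntegral.integral_eq_sub_of_hasDeriv_right_of_le hab
    (fun t ht => (hd t ht).continuousWithinAt)
    (fun t ht => ((hd t (Ioo_subset_Icc_self ht)).hasDerivAt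
      (Icc_mem_nhds ht.1 ht.2)).hasDerivWithinAt)
    (hc.intervalIntegrable_of_Icc hab)

theorem integral_primitive_apply_deriv {p : ℝ → E →L[ℝ] ℝ} {a b : ℝ} (hab : a ≤ b)
    (hp : ContinuousOn p (Icc a b)) {h h' : ℝ → E} (hh : IsFixedEndpointVariation a b h h') :
    ∫ t in a..b, (∫ s in a..t, p s) (h' t) = -∫ t in a..b, p t (h t) := by
  set P : ℝ → E →L[ℝ] ℝ := fun t => ∫ s in a..t, p s
  have hP : ∀ t ∈ Icc a b, HasDerivWithinAt P (p t) (Icc a b) t :=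
    fun t ht => hasDerivWithinAt_integral_Icc hp ht
  have hPc : ContinuousOn P (Icc a b) := fun t ht => (hP t ht).continuousWithinAt
  have hph : ContinuousOn (fun t => p t (h t)) (Icc a b) := hp.clm_apply hh.continuousOn
  have hPh' : ContinuousOn (fun t => P t (h' t)) (Icc a b) :=
    hPc.clm_apply hh.continuousOn_deriv
  have parts : ∫ t in a..b, (p t (h t) + P t (h' t)) = P b (h b) - P a (h a) :=
    integral_eq_sub_of_hasDerivWithinAt_Icc hab
      (fun t ht => (hP t ht).clm_apply (hh.hasDerivWithinAt t ht)) (hph.add hPh')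
  rw [intervalIntegral.integral_add (hph.intervalIntegrable_of_Icc hab)
    (hPh'.intervalIntegrable_of_Icc hab), hh.left, hh.right] at parts
  simp only [map_zero, sub_zero] at parts
  linear_combination parts

theorem eq_left_of_integral_deriv_mul_eq_zero {f : ℝ → ℝ} {a b : ℝ} (hab : a < b)
    (hf : ContinuousOn f (Icc a b))
    (H : ∀ φ φ' : ℝ → ℝ, IsFixedEndpointVariation a b φ φ' → ∫ t in a..b, φ' t * f t = 0) :
    ∀ t ∈ Icc a b, f t = f a := by
  set c := (∫ t in a..b, f t) / (b - a)
  have hfc : ContinuousOn (fun t => f t - c) (Icc a b) := hf.sub continuousOn_const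
  have hmean : ∫ t in a..b, (f t - c) = 0 := by
    rw [intervalIntegral.integral_sub (hf.intervalIntegrable_of_Icc hab.le)
      intervalIntegrable_const, intervalIntegral.integral_const, smul_eq_mul,
      mul_div_cancel₀ _ (sub_pos.2 hab).ne', sub_self]
  have hφ : IsFixedEndpointVariation a b (fun t => ∫ s in a..t, (f s - c)) (fun t => f t - c) :=
    { hasDerivWithinAt := fun t ht => hasDerivWithinAt_integral_Icc hfc ht
      continuousOn_deriv := hfc
      left := intervalIntegral.integral_same
      right := hmean }
  have hsq : ∫ t in a..b, (f t - c) ^ 2 = 0 := by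
    have hmul := H _ _ hφ
    have hfc_mul : ContinuousOn (fun t => (f t - c) * f t) (Icc a b) := hfc.mul hf
    have hc_mul : ContinuousOn (fun t => c * (f t - c)) (Icc a b) := continuousOn_const.mul hfc
    calc ∫ t in a..b, (f t - c) ^ 2 = ∫ t in a..b, ((f t - c) * f t - c * (f t - c)) :=
          intervalIntegral.integral_congr fun t _ => by ring
      _ = 0 := by
          rw [intervalIntegral.integral_sub (hfc_mul.intervalIntegrable_of_Icc hab.le)
            (hc_mul.intervalIntegrable_of_Icc hab.le),
            intervalIntegral.integral_const_mul, hmul, hmean]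
          ring
  have hconst : ∀ t ∈ Icc a b, f t = c := by
    intro t ht
    by_contra hne
    refine (intervalIntegral.integral_pos hab (hfc.pow 2) (fun _ _ => sq_nonneg _)
      ⟨t, ht, sq_pos_of_ne_zero (sub_ne_zero.2 hne)⟩).ne' hsq
  intro t ht
  rw [hconst t ht, hconst a (left_mem_Icc.2 hab.le)]

theorem eq_left_of_integral_apply_deriv_eq_zero {g : ℝ → E →L[ℝ] ℝ} {a b : ℝ} (hab : a < b)
    (hg : ContinuousOn g (Icc a b))
    (H : ∀ h h' : ℝ → E, IsFixedEndpointVariation a b h h' → ∫ t in a..b, g t (h' t) = 0) :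
    ∀ t ∈ Icc a b, g t = g a := by
  intro t ht
  ext v
  refine eq_left_of_integral_deriv_mul_eq_zero hab (hg.clm_apply continuousOn_const)
    (fun φ φ' hφ => ?_) t ht
  simpa using H _ _ (hφ.smul_const v)

/-- Dubois-Reymond lemma: if `∫ (p·h + q·h') = 0` for all `C¹` functions `h` on `[α,β]`
vanishing at the endpoints, then `q` is `C¹` with `q' = p`. -/
theorem stmt_5 {n : ℕ} (α β : ℝ) (hαβ : α < β)
    (p q : ℝ → (Fin n → ℝ) →L[ℝ] ℝ)
    (hp : ContinuousOn p (Set.Icc α β)) (hq : ContinuousOn q (Set.Icc α β))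
    (H : ∀ h h' : ℝ → (Fin n → ℝ),
      (∀ t ∈ Set.Icc α β, HasDerivWithinAt h (h' t) (Set.Icc α β) t) →
      ContinuousOn h' (Set.Icc α β) → h α = 0 → h β = 0 →
      ∫ t in Set.Icc α β, (p t (h t) + q t (h' t)) = 0) :
    (∀ t ∈ Set.Icc α β, HasDerivWithinAt q (p t) (Set.Icc α β) t) ∧
      ContinuousOn (fun t => p t) (Set.Icc α β) := by
  set P : ℝ → (Fin n → ℝ) →L[ℝ] ℝ := fun t => ∫ s in α..t, p s
  have hP : ∀ t ∈ Icc α β, HasDerivWithinAt P (p t) (Icc α β) t :=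
    fun t ht => hasDerivWithinAt_integral_Icc hp ht
  have hPc : ContinuousOn P (Icc α β) := fun t ht => (hP t ht).continuousWithinAt
  have hvar : ∀ h h', IsFixedEndpointVariation α β h h' →
      ∫ t in α..β, (q t - P t) (h' t) = 0 := by
    intro h h' hh
    have hpq := H h h' hh.hasDerivWithinAt hh.continuousOn_deriv hh.left hh.right
    have hph := (hp.clm_apply hh.continuousOn).intervalIntegrable_of_Icc
      (μ := volume) hαβ.le
    have hqh' := (hq.clm_apply hh.continuousOn_deriv).intervalIntegrable_of_Icc
      (μ := volume) hαβ.le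
    have hPh' := (hPc.clm_apply hh.continuousOn_deriv).intervalIntegrable_of_Icc
      (μ := volume) hαβ.le
    rw [integral_Icc_eq_integral_Ioc, ← intervalIntegral.integral_of_le hαβ.le,
      intervalIntegral.integral_add hph hqh'] at hpq
    simp only [sub_apply]
    rw [intervalIntegral.integral_sub hqh' hPh', integral_primitive_apply_deriv hαβ.le hp hh]
    linarith
  have hconst := eq_left_of_integral_apply_deriv_eq_zero hαβ (hq.sub hPc) hvar
  have hq_eq : EqOn q (fun t => P t + q α) (Icc α β) := fun t ht => by
    have := hconst t ht
    simp only [Pi.sub_apply, P, intervalIntegral.integral_same, sub_zero] at this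
    exact this ▸ (add_sub_cancel _ _).symm
  exact ⟨fun t ht => ((hP t ht).add_const (q α)).congr hq_eq (hq_eq ht), hp⟩
end

section
/- Let I be a compact interval of ℝ, V, W normed vector spaces, and Φ : I × V → W continuous such that the partial Fréchet differential D_2Φ(t,x) with respect to the second variable exists for all (t,x) and D_2Φ : I × V → L(V,W) is continuous. Then the Nemytskii operator N_Φ : C^0(I,V) → C^0(I,W), N_Φ(v) := (t ↦ Φ(t, v(t))), is of class C^1, with DN_Φ(v)·δv = (t ↦ D_2Φ(t, v(t)) · δv(t)). -/
/-!
The one analytic input is that the Nemytskii operator of a *continuous* map is continuous for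
the sup norm (the compact-open topology, as the base is compact). Applied to `D₂Φ` it gives the
continuity of the derivative, and, combined with the mean value inequality on the segments
`[v t, v t + h t]`, the uniform-in-`t` remainder estimate that makes the derivative Fréchet.
-/

open Set

section MeanValue

variable {V W : Type*} [NormedAddCommGroup V] [NormedSpace ℝ V] [NormedAddCommGroup W]
  [NormedSpace ℝ W]

theorem norm_sub_sub_fderiv_le_of_forall_segment {f : V → W} {f' : V → V →L[ℝ] W}
    (hf : ∀ y, HasFDerivAt f (f' y) y) {x h : V} {ε : ℝ}
    (hε : ∀ θ ∈ Icc (0 : ℝ) 1, ‖f' (x + θ • h) - f' x‖ ≤ ε) :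
    ‖f (x + h) - f x - f' x h‖ ≤ ε * ‖h‖ := by
  have hbound : ∀ z ∈ segment ℝ x (x + h), ‖f' z - f' x‖ ≤ ε := by
    rw [segment_eq_image']
    rintro _ ⟨θ, hθ, rfl⟩
    simpa using hε θ hθ
  simpa using Convex.norm_image_sub_le_of_norm_hasFDerivWithin_le'
    (fun z _ => (hf z).hasFDerivWithinAt) hbound (convex_segment _ _)
    (left_mem_segment _ _ _) (right_mem_segment _ _ _)

end MeanValue

namespace ContinuousMap

variable {X : Type*} [TopologicalSpace X]

def nemytskii {V Y : Type*} [TopologicalSpace V] [TopologicalSpace Y] (F : C(X × V, Y))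
    (v : C(X, V)) : C(X, Y) :=
  F.comp ((ContinuousMap.id X).prodMk v)

theorem continuous_nemytskii [CompactSpace X] {V Y : Type*} [PseudoMetricSpace V]
    [PseudoMetricSpace Y] (F : C(X × V, Y)) : Continuous (nemytskii F) := by
  have hF : Continuous fun p : C(X, V) × X => F (p.2, p.1 p.2) := by fun_prop
  exact (ContinuousMap.curry ⟨_, hF⟩).continuous

section PointwiseApply

variable {𝕜 V W : Type*} [NontriviallyNormedField 𝕜] [CompactSpace X]
  [NormedAddCommGroup V] [NormedSpace 𝕜 V] [NormedAddCommGroup W] [NormedSpace 𝕜 W]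

noncomputable def pointwiseApply : C(X, V →L[𝕜] W) →L[𝕜] C(X, V) →L[𝕜] C(X, W) :=
  LinearMap.mkContinuous₂
    (LinearMap.mk₂ 𝕜
      (fun (A : C(X, V →L[𝕜] W)) (v : C(X, V)) => (⟨fun t => A t (v t), by fun_prop⟩ : C(X, W)))
      (fun _ _ _ => by ext; simp) (fun _ _ _ => by ext; simp)
      (fun _ _ _ => by ext; simp) (fun _ _ _ => by ext; simp))
    1 fun A v => by
      refine (ContinuousMap.norm_le _ (by positivity)).2 fun t => ?_
      calc ‖A t (v t)‖ ≤ ‖A t‖ * ‖v t‖ := (A t).le_opNorm _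
        _ ≤ 1 * ‖A‖ * ‖v‖ := by
          rw [one_mul]
          gcongr
          exacts [A.norm_coe_le_norm t, v.norm_coe_le_norm t]

end PointwiseApply

section Differentiability

variable {V W : Type*} [CompactSpace X]
  [NormedAddCommGroup V] [NormedSpace ℝ V] [NormedAddCommGroup W] [NormedSpace ℝ W]

theorem hasFDerivAt_nemytskii (F : C(X × V, W)) (D : C(X × V, V →L[ℝ] W))
    (hD : ∀ t x, HasFDerivAt (fun y => F (t, y)) (D (t, x)) x) (v : C(X, V)) :
    HasFDerivAt (nemytskii F) (pointwiseApply (nemytskii D v)) v := by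
  rw [hasFDerivAt_iff_isLittleO_nhds_zero, Asymptotics.isLittleO_iff]
  intro ε hε
  obtain ⟨δ, hδ, hDδ⟩ := Metric.continuousAt_iff.1 (continuous_nemytskii D).continuousAt ε hε
  filter_upwards [Metric.ball_mem_nhds 0 hδ] with h hh
  rw [mem_ball_zero_iff] at hh
  refine (ContinuousMap.norm_le _ (by positivity)).2 fun t => ?_
  have hclose : ∀ θ ∈ Icc (0 : ℝ) 1, ‖D (t, v t + θ • h t) - D (t, v t)‖ ≤ ε := by
    intro θ hθ
    have hθh : dist (v + θ • h) v < δ := by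
      rw [dist_eq_norm, add_sub_cancel_left, norm_smul, Real.norm_of_nonneg hθ.1]
      exact lt_of_le_of_lt (mul_le_of_le_one_left (norm_nonneg _) hθ.2) hh
    rw [← dist_eq_norm]
    exact (dist_apply_le_dist t).trans (hDδ hθh).le
  calc ‖(nemytskii F (v + h) - nemytskii F v - pointwiseApply (nemytskii D v) h) t‖
      = ‖F (t, v t + h t) - F (t, v t) - D (t, v t) (h t)‖ := rfl
    _ ≤ ε * ‖h t‖ := norm_sub_sub_fderiv_le_of_forall_segment (hD t) hclose
    _ ≤ ε * ‖h‖ := by gcongr; exact h.norm_coe_le_norm t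

end Differentiability

end ContinuousMap

open ContinuousMap

theorem stmt_12_general (a b : ℝ) {V W : Type*}
    [NormedAddCommGroup V] [NormedSpace ℝ V] [NormedAddCommGroup W] [NormedSpace ℝ W]
    (Φ : Set.Icc a b × V → W) (hΦ : Continuous Φ)
    (D : Set.Icc a b → V → (V →L[ℝ] W))
    (hD : ∀ (t : Set.Icc a b) (x : V), HasFDerivAt (fun y => Φ (t, y)) (D t x) x)
    (hDc : Continuous fun p : Set.Icc a b × V => D p.1 p.2) :
    ∃ DN : C(Set.Icc a b, V) → (C(Set.Icc a b, V) →L[ℝ] C(Set.Icc a b, W)),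
      (∀ v : C(Set.Icc a b, V),
        HasFDerivAt
          (fun u : C(Set.Icc a b, V) =>
            (⟨fun t => Φ (t, u t),
              hΦ.comp (continuous_id.prodMk u.continuous)⟩ : C(Set.Icc a b, W)))
          (DN v) v) ∧
      Continuous DN ∧
      ∀ (v δv : C(Set.Icc a b, V)) (t : Set.Icc a b), DN v δv t = D t (v t) (δv t) := by
  let D₂ : C(Set.Icc a b × V, V →L[ℝ] W) := ⟨fun p => D p.1 p.2, hDc⟩
  exact ⟨fun v => pointwiseApply (nemytskii D₂ v),
    hasFDerivAt_nemytskii ⟨Φ, hΦ⟩ D₂ hD,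
    pointwiseApply.continuous.comp (continuous_nemytskii D₂),
    fun _ _ _ => rfl⟩

/-- Differentiability of Nemytskii operators: if `Φ : I × V → W` is continuous on a
compact interval `I = [a,b]`, has a partial Fréchet differential `D₂Φ` in the second
variable everywhere, and `D₂Φ` is continuous, then `N_Φ : C^0(I,V) → C^0(I,W)`,
`N_Φ(v) = (t ↦ Φ(t, v(t)))`, is of class `C¹` with
`DN_Φ(v)·δv = (t ↦ D₂Φ(t, v(t))·δv(t))`. -/
theorem stmt_12 (a b : ℝ) (hab : a ≤ b) {V W : Type*}
    [NormedAddCommGroup V] [NormedSpace ℝ V] [NormedAddCommGroup W] [NormedSpace ℝ W]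
    (Φ : Set.Icc a b × V → W) (hΦ : Continuous Φ)
    (D : Set.Icc a b → V → (V →L[ℝ] W))
    (hD : ∀ (t : Set.Icc a b) (x : V), HasFDerivAt (fun y => Φ (t, y)) (D t x) x)
    (hDc : Continuous fun p : Set.Icc a b × V => D p.1 p.2) :
    ∃ DN : C(Set.Icc a b, V) → (C(Set.Icc a b, V) →L[ℝ] C(Set.Icc a b, W)),
      (∀ v : C(Set.Icc a b, V),
        HasFDerivAt
          (fun u : C(Set.Icc a b, V) =>
            (⟨fun t => Φ (t, u t),
              hΦ.comp (continuous_id.prodMk u.continuous)⟩ : C(Set.Icc a b, W)))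
          (DN v) v) ∧
      Continuous DN ∧
      ∀ (v δv : C(Set.Icc a b, V)) (t : Set.Icc a b), DN v δv t = D t (v t) (δv t) :=
  stmt_12_general a b Φ hΦ D hD hDc
end

section
/- Under assumptions (A1)–(A3), the functional J(x) := ∫_0^T F(t, x_t, x'(t)) dt is of class C^1 on 𝔛, and for every x ∈ 𝔛 and h ∈ 𝔛, DJ(x)·h = ∫_0^T ( D_2F(t, x_t, x'(t))·h_t + D_3F(t, x_t, x'(t))·h'(t) ) dt. -/
/-!
View the integrand as a function of the state `(x_t, x'(t)) ∈ C([-r,0], ℝⁿ) × ℝⁿ`. Continuity of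
the partial derivatives makes `F t` Fréchet differentiable in the state, with derivative
`D₂F ⊕ D₃F`, jointly continuous in `(t, state)`. Near the compact set of states of a fixed `x` this
derivative is uniformly continuous, so the mean value inequality bounds the first-order Taylor
remainder by `ε ‖state‖` uniformly in `t`. Since the state of `h` has norm at most `‖h‖_𝔛`,
integrating over `[0, T]` gives both the Fréchet differentiability of `J` and the continuity of `DJ`.
-/

open Set MeasureTheory

def memX {n : ℕ} (T : ℝ) (x : ℝ → Fin n → ℝ) : Prop :=
  Continuous x ∧ DifferentiableOn ℝ x (Set.Icc 0 T) ∧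
    ContinuousOn (derivWithin x (Set.Icc 0 T)) (Set.Icc 0 T)

noncomputable def Xnorm {n : ℕ} (r T : ℝ) (x : ℝ → Fin n → ℝ) : ℝ :=
  (⨆ t : Set.Icc (-r) T, ‖x t‖) + ⨆ t : Set.Icc (0 : ℝ) T, ‖derivWithin x (Set.Icc 0 T) t‖

noncomputable def hist {n : ℕ} (r : ℝ) (x : ℝ → Fin n → ℝ) (hx : Continuous x) (t : ℝ) :
    C(Set.Icc (-r) (0 : ℝ), Fin n → ℝ) :=
  ⟨fun θ => x (t + θ.1), hx.comp (continuous_const.add continuous_subtype_val)⟩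

/-- The criterion `J(x) = ∫_0^T F(t, x_t, x'(t)) dt`. -/
noncomputable def Jfun {n : ℕ} (r T : ℝ)
    (F : ℝ → C(Set.Icc (-r) (0 : ℝ), Fin n → ℝ) → (Fin n → ℝ) → ℝ)
    (x : ℝ → Fin n → ℝ) (hx : Continuous x) : ℝ :=
  ∫ t in Set.Icc (0 : ℝ) T, F t (hist r x hx t) (derivWithin x (Set.Icc 0 T) t)

theorem ContinuousOn.comp_graph {α β γ : Type*} [TopologicalSpace α] [TopologicalSpace β]
    [TopologicalSpace γ] {s : Set α} {G : α → β → γ}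
    (hG : ContinuousOn (fun p : α × β => G p.1 p.2) (s ×ˢ univ)) {c : α → β}
    (hc : ContinuousOn c s) : ContinuousOn (fun t => G t (c t)) s :=
  hG.comp (continuousOn_id.prodMk hc) fun _ ht => ⟨ht, mem_univ _⟩

theorem IsCompact.exists_pos_forall_dist_lt_of_continuousOn {α E W : Type*}
    [PseudoMetricSpace α] [PseudoMetricSpace E] [PseudoMetricSpace W] {s : Set α}
    (hs : IsCompact s) {G : α → E → W}
    (hG : ContinuousOn (fun p : α × E => G p.1 p.2) (s ×ˢ univ)) {c : α → E}
    (hc : ContinuousOn c s) {ε : ℝ} (hε : 0 < ε) :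
    ∃ δ > 0, ∀ t ∈ s, ∀ e, dist e (c t) ≤ δ → dist (G t e) (G t (c t)) < ε := by
  have hGc : ContinuousOn (fun p : α × E => G p.1 (c p.1)) (s ×ˢ univ) :=
    (hG.comp_graph hc).comp continuousOn_fst fun _ hp => hp.1
  obtain ⟨U, hU, hUeq⟩ :=
    continuousOn_iff'.1 (continuous_dist.comp_continuousOn (hG.prodMk hGc)) (Iio ε) isOpen_Iio
  have hU' : ∀ t ∈ s, ∀ e, (t, e) ∈ U ↔ dist (G t e) (G t (c t)) < ε := fun t ht e => by
    have := Set.ext_iff.1 hUeq (t, e)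
    simp only [mem_inter_iff, mem_prod, ht, mem_univ, and_true] at this
    exact this.symm
  have hK : IsCompact ((fun t => (t, c t)) '' s) :=
    hs.image_of_continuousOn (continuousOn_id.prodMk hc)
  have hKU : (fun t => (t, c t)) '' s ⊆ U := by
    rintro _ ⟨t, ht, rfl⟩
    simpa [hU' t ht] using hε
  obtain ⟨δ, hδ, hδU⟩ := hK.exists_cthickening_subset_open hU hKU
  refine ⟨δ, hδ, fun t ht e he => (hU' t ht e).1 (hδU ?_)⟩
  exact Metric.mem_cthickening_of_dist_le _ (t, c t) _ _ ⟨t, ht, rfl⟩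
    (by simpa [Prod.dist_eq] using he)

theorem IsCompact.exists_pos_forall_norm_sub_sub_fderiv_le {α P W : Type*} [PseudoMetricSpace α]
    [NormedAddCommGroup P] [NormedSpace ℝ P] [NormedAddCommGroup W] [NormedSpace ℝ W]
    {s : Set α} (hs : IsCompact s) {Φ : α → P → W} {DΦ : α → P → P →L[ℝ] W}
    (hΦ : ∀ t ∈ s, ∀ p, HasFDerivAt (Φ t) (DΦ t p) p)
    (hDΦ : ContinuousOn (fun q : α × P => DΦ q.1 q.2) (s ×ˢ univ)) {c : α → P}
    (hc : ContinuousOn c s) {ε : ℝ} (hε : 0 < ε) :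
    ∃ δ > 0, ∀ t ∈ s, ∀ p, ‖p‖ ≤ δ → ‖Φ t (c t + p) - Φ t (c t) - DΦ t (c t) p‖ ≤ ε * ‖p‖ := by
  obtain ⟨δ, hδ, hDΦδ⟩ := hs.exists_pos_forall_dist_lt_of_continuousOn hDΦ hc hε
  refine ⟨δ, hδ, fun t ht p hp => ?_⟩
  have := (convex_closedBall (c t) δ).norm_image_sub_le_of_norm_hasFDerivWithin_le'
    (fun q _ => (hΦ t ht q).hasFDerivWithinAt)
    (fun q hq => (dist_eq_norm (DΦ t q) _ ▸ hDΦδ t ht q hq).le)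
    (Metric.mem_closedBall_self hδ.le) (y := c t + p) (by simpa using hp)
  simpa using this

theorem hasFDerivAt_uncurry_coprod_of_continuousOn {α E₁ E₂ W : Type*} [TopologicalSpace α]
    [NormedAddCommGroup E₁] [NormedSpace ℝ E₁] [NormedAddCommGroup E₂] [NormedSpace ℝ E₂]
    [NormedAddCommGroup W] [NormedSpace ℝ W] {s : Set α} {f : α → E₁ → E₂ → W}
    {f₁ : α → E₁ → E₂ → E₁ →L[ℝ] W} {f₂ : α → E₁ → E₂ → E₂ →L[ℝ] W}
    (hf₁ : ∀ t ∈ s, ∀ u v, HasFDerivAt (f t · v) (f₁ t u v) u)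
    (hf₂ : ∀ t ∈ s, ∀ u v, HasFDerivAt (f t u ·) (f₂ t u v) v)
    (cf₁ : ContinuousOn (fun q : α × E₁ × E₂ => f₁ q.1 q.2.1 q.2.2) (s ×ˢ univ))
    (cf₂ : ContinuousOn (fun q : α × E₁ × E₂ => f₂ q.1 q.2.1 q.2.2) (s ×ˢ univ)) :
    ∀ t ∈ s, ∀ p : E₁ × E₂,
      HasFDerivAt (fun q : E₁ × E₂ => f t q.1 q.2) ((f₁ t p.1 p.2).coprod (f₂ t p.1 p.2)) p := by
  intro t ht p
  have slice : MapsTo (fun q : E₁ × E₂ => (t, q)) univ (s ×ˢ univ) := fun _ _ => ⟨ht, mem_univ _⟩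
  have hslice : ContinuousOn (fun q : E₁ × E₂ => (t, q)) univ := by fun_prop
  exact (hasStrictFDerivAt_uncurry_coprod (f := f t) (f₁ := f₁ t) (f₂ := f₂ t)
    (.of_forall fun q => hf₁ t ht q.1 q.2) (.of_forall fun q => hf₂ t ht q.1 q.2)
    (continuousOn_univ.1 (cf₁.comp hslice slice)).continuousAt
    (continuousOn_univ.1 (cf₂.comp hslice slice)).continuousAt).hasFDerivAt

theorem norm_setIntegral_le_mul_of_forall_norm_le {X E : Type*} [MeasurableSpace X]
    [NormedAddCommGroup E] [NormedSpace ℝ E] {μ : Measure X} {s : Set X} (hs : μ s < ⊤)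
    {f : X → E} {ε C : ℝ} (hε : 0 ≤ ε) (hC : 0 ≤ C)
    (hf : ∀ t ∈ s, ‖f t‖ ≤ ε / (μ.real s + 1) * C) : ‖∫ t in s, f t ∂μ‖ ≤ ε * C := by
  have hμ : 0 ≤ μ.real s := measureReal_nonneg
  calc ‖∫ t in s, f t ∂μ‖ ≤ ε / (μ.real s + 1) * C * μ.real s :=
        norm_setIntegral_le_of_norm_le_const hs hf
    _ = ε * C * (μ.real s / (μ.real s + 1)) := by ring
    _ ≤ ε * C * 1 := by gcongr; exact div_le_one_of_le₀ (by linarith) (by linarith)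
    _ = ε * C := mul_one _

section IntegralFunctional

variable {α P W : Type*} [MetricSpace α] [MeasurableSpace α] [OpensMeasurableSpace α]
  {μ : Measure α} [IsFiniteMeasureOnCompacts μ] [NormedAddCommGroup P] [NormedSpace ℝ P]
  [NormedAddCommGroup W] [NormedSpace ℝ W] {s : Set α} {DΦ : α → P → P →L[ℝ] W} {c : α → P}
  {ε : ℝ}

theorem IsCompact.exists_pos_norm_setIntegral_sub_sub_le (hs : IsCompact s) {Φ : α → P → W}
    (hΦc : ContinuousOn (fun q : α × P => Φ q.1 q.2) (s ×ˢ univ))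
    (hΦ : ∀ t ∈ s, ∀ p, HasFDerivAt (Φ t) (DΦ t p) p)
    (hDΦ : ContinuousOn (fun q : α × P => DΦ q.1 q.2) (s ×ˢ univ))
    (hc : ContinuousOn c s) (hε : 0 < ε) :
    ∃ δ > 0, ∀ d : α → P, ContinuousOn d s → ∀ X, 0 ≤ X → X ≤ δ → (∀ t ∈ s, ‖d t‖ ≤ X) →
      ‖∫ t in s, Φ t (c t + d t) ∂μ - ∫ t in s, Φ t (c t) ∂μ -
        ∫ t in s, DΦ t (c t) (d t) ∂μ‖ ≤ ε * X := by
  have hε' : 0 < ε / (μ.real s + 1) := by positivity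
  obtain ⟨δ, hδ, H⟩ := hs.exists_pos_forall_norm_sub_sub_fderiv_le hΦ hDΦ hc hε'
  refine ⟨δ, hδ, fun d hd X hX hXδ hdX => ?_⟩
  have hint : ∀ e : α → P, ContinuousOn e s → IntegrableOn (fun t => Φ t (e t)) s μ :=
    fun e he => (hΦc.comp_graph he).integrableOn_compact hs
  have hcd : IntegrableOn (fun t => Φ t (c t + d t)) s μ := hint (fun t => c t + d t) (hc.add hd)
  have hdiff : IntegrableOn (fun t => Φ t (c t + d t) - Φ t (c t)) s μ := hcd.sub (hint c hc)
  rw [← integral_sub hcd (hint c hc), ← integral_sub hdiff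
    ((hDΦ.comp_graph hc).clm_apply hd |>.integrableOn_compact hs)]
  refine norm_setIntegral_le_mul_of_forall_norm_le hs.measure_lt_top hε.le hX fun t ht => ?_
  exact (H t ht (d t) ((hdX t ht).trans hXδ)).trans (mul_le_mul_of_nonneg_left (hdX t ht) hε'.le)

theorem IsCompact.exists_pos_norm_setIntegral_clm_apply_sub_le (hs : IsCompact s)
    (hDΦ : ContinuousOn (fun q : α × P => DΦ q.1 q.2) (s ×ˢ univ))
    (hc : ContinuousOn c s) (hε : 0 < ε) :
    ∃ δ > 0, ∀ c' : α → P, ContinuousOn c' s → (∀ t ∈ s, ‖c' t - c t‖ ≤ δ) →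
      ∀ d : α → P, ContinuousOn d s → ∀ X, 0 ≤ X → (∀ t ∈ s, ‖d t‖ ≤ X) →
        ‖∫ t in s, DΦ t (c' t) (d t) ∂μ - ∫ t in s, DΦ t (c t) (d t) ∂μ‖ ≤ ε * X := by
  have hε' : 0 < ε / (μ.real s + 1) := by positivity
  obtain ⟨δ, hδ, H⟩ := hs.exists_pos_forall_dist_lt_of_continuousOn hDΦ hc hε'
  refine ⟨δ, hδ, fun c' hc' hc'c d hd X hX hdX => ?_⟩
  have hint : ∀ e : α → P, ContinuousOn e s → IntegrableOn (fun t => DΦ t (e t) (d t)) s μ :=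
    fun e he => ((hDΦ.comp_graph he).clm_apply hd).integrableOn_compact hs
  rw [← integral_sub (hint c' hc') (hint c hc)]
  refine norm_setIntegral_le_mul_of_forall_norm_le hs.measure_lt_top hε.le hX fun t ht => ?_
  have hDt : ‖DΦ t (c' t) - DΦ t (c t)‖ ≤ ε / (μ.real s + 1) :=
    (dist_eq_norm (DΦ t (c' t)) _ ▸ H t ht (c' t) (dist_eq_norm (c' t) _ ▸ hc'c t ht)).le
  calc ‖DΦ t (c' t) (d t) - DΦ t (c t) (d t)‖ = ‖(DΦ t (c' t) - DΦ t (c t)) (d t)‖ := rfl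
    _ ≤ ‖DΦ t (c' t) - DΦ t (c t)‖ * ‖d t‖ := ContinuousLinearMap.le_opNorm _ _
    _ ≤ ε / (μ.real s + 1) * X := mul_le_mul hDt (hdX t ht) (norm_nonneg _) hε'.le

end IntegralFunctional

section History

variable {n : ℕ} {r T : ℝ}

theorem continuous_hist {x : ℝ → Fin n → ℝ} (hx : Continuous x) : Continuous (hist r x hx) :=
  (ContinuousMap.curry ⟨fun p : ℝ × Icc (-r) (0 : ℝ) => x (p.1 + p.2.1), by fun_prop⟩).continuous

noncomputable def histState (r T : ℝ) (x : ℝ → Fin n → ℝ) (hx : Continuous x) (t : ℝ) :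
    C(Icc (-r) (0 : ℝ), Fin n → ℝ) × (Fin n → ℝ) :=
  (hist r x hx t, derivWithin x (Icc 0 T) t)

theorem memX.sub {x y : ℝ → Fin n → ℝ} (hy : memX T y) (hx : memX T x) :
    memX T (fun t => y t - x t) :=
  ⟨hy.1.sub hx.1, hy.2.1.sub hx.2.1,
    (hy.2.2.sub hx.2.2).congr fun t ht => derivWithin_sub (hy.2.1 t ht) (hx.2.1 t ht)⟩

theorem memX.continuousOn_histState {x : ℝ → Fin n → ℝ} (hx : memX T x) :
    ContinuousOn (histState r T x hx.1) (Icc 0 T) :=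
  (continuous_hist hx.1).continuousOn.prodMk hx.2.2

theorem histState_add {x h : ℝ → Fin n → ℝ} (hx : Continuous x) (hh : Continuous h) {t : ℝ}
    (hxt : DifferentiableWithinAt ℝ x (Icc 0 T) t)
    (hht : DifferentiableWithinAt ℝ h (Icc 0 T) t) :
    histState r T (fun s => x s + h s) (hx.add hh) t = histState r T x hx t + histState r T h hh t :=
  Prod.ext (ContinuousMap.ext fun _ => rfl) (derivWithin_add hxt hht)

theorem histState_sub {x y : ℝ → Fin n → ℝ} (hy : Continuous y) (hx : Continuous x) {t : ℝ}
    (hyt : DifferentiableWithinAt ℝ y (Icc 0 T) t)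
    (hxt : DifferentiableWithinAt ℝ x (Icc 0 T) t) :
    histState r T (fun s => y s - x s) (hy.sub hx) t = histState r T y hy t - histState r T x hx t :=
  Prod.ext (ContinuousMap.ext fun _ => rfl) (derivWithin_sub hyt hxt)

theorem Xnorm_nonneg (x : ℝ → Fin n → ℝ) : 0 ≤ Xnorm r T x :=
  add_nonneg (Real.iSup_nonneg fun _ => norm_nonneg _) (Real.iSup_nonneg fun _ => norm_nonneg _)

theorem le_iSup_norm_of_continuousOn {E : Type*} [NormedAddCommGroup E] {a b : ℝ} {f : ℝ → E}
    (hf : ContinuousOn f (Icc a b)) (t : Icc a b) : ‖f t‖ ≤ ⨆ s : Icc a b, ‖f s‖ :=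
  le_ciSup (isCompact_range (hf.norm.domRestrict)).bddAbove t

theorem norm_histState_le_Xnorm {h : ℝ → Fin n → ℝ} (hh : memX T h) {t : ℝ}
    (ht : t ∈ Icc (0 : ℝ) T) : ‖histState r T h hh.1 t‖ ≤ Xnorm r T h := by
  refine norm_prod_le_iff.2 ⟨?_, ?_⟩
  · refine (ContinuousMap.norm_le _ (Real.iSup_nonneg fun _ => norm_nonneg _)).2 (fun θ => ?_)
      |>.trans (le_add_of_nonneg_right (Real.iSup_nonneg fun _ => norm_nonneg _))
    exact le_iSup_norm_of_continuousOn hh.1.continuousOn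
      ⟨t + θ.1, by linarith [θ.2.1, ht.1], by linarith [θ.2.2, ht.2]⟩
  · exact (le_iSup_norm_of_continuousOn hh.2.2 ⟨t, ht⟩).trans
      (le_add_of_nonneg_left (Real.iSup_nonneg fun _ => norm_nonneg _))

end History

theorem stmt_14_general (r T : ℝ) (n : ℕ)
    (F : ℝ → C(Set.Icc (-r) (0 : ℝ), Fin n → ℝ) → (Fin n → ℝ) → ℝ)
    -- (A1)
    (hF : ContinuousOn
      (fun p : ℝ × C(Set.Icc (-r) (0 : ℝ), Fin n → ℝ) × (Fin n → ℝ) => F p.1 p.2.1 p.2.2)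
      (Set.Icc 0 T ×ˢ Set.univ))
    -- (A2)
    (D₂F : ℝ → C(Set.Icc (-r) (0 : ℝ), Fin n → ℝ) → (Fin n → ℝ) →
      (C(Set.Icc (-r) (0 : ℝ), Fin n → ℝ) →L[ℝ] ℝ))
    (hD₂ : ∀ t ∈ Set.Icc (0 : ℝ) T, ∀ φ v, HasFDerivAt (fun ψ => F t ψ v) (D₂F t φ v) φ)
    (hD₂c : ContinuousOn
      (fun p : ℝ × C(Set.Icc (-r) (0 : ℝ), Fin n → ℝ) × (Fin n → ℝ) => D₂F p.1 p.2.1 p.2.2)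
      (Set.Icc 0 T ×ˢ Set.univ))
    -- (A3)
    (D₃F : ℝ → C(Set.Icc (-r) (0 : ℝ), Fin n → ℝ) → (Fin n → ℝ) → ((Fin n → ℝ) →L[ℝ] ℝ))
    (hD₃ : ∀ t ∈ Set.Icc (0 : ℝ) T, ∀ φ v, HasFDerivAt (fun w => F t φ w) (D₃F t φ v) v)
    (hD₃c : ContinuousOn
      (fun p : ℝ × C(Set.Icc (-r) (0 : ℝ), Fin n → ℝ) × (Fin n → ℝ) => D₃F p.1 p.2.1 p.2.2)
      (Set.Icc 0 T ×ˢ Set.univ)) :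
    -- Fréchet differentiability of J at every x ∈ X, with the announced differential
    (∀ (x : ℝ → Fin n → ℝ) (hx : memX T x), ∀ ε > (0 : ℝ), ∃ δ > (0 : ℝ),
      ∀ (h : ℝ → Fin n → ℝ) (hh : memX T h), Xnorm r T h ≤ δ →
        |Jfun r T F (fun t => x t + h t) (hx.1.add hh.1) - Jfun r T F x hx.1 -
          ∫ t in Set.Icc (0 : ℝ) T,
            (D₂F t (hist r x hx.1 t) (derivWithin x (Set.Icc 0 T) t) (hist r h hh.1 t) +
             D₃F t (hist r x hx.1 t) (derivWithin x (Set.Icc 0 T) t)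
               (derivWithin h (Set.Icc 0 T) t))| ≤ ε * Xnorm r T h) ∧
    -- continuity of x ↦ DJ(x) in the operator norm sense
    (∀ (x : ℝ → Fin n → ℝ) (hx : memX T x), ∀ ε > (0 : ℝ), ∃ δ > (0 : ℝ),
      ∀ (y : ℝ → Fin n → ℝ) (hy : memX T y), Xnorm r T (fun t => y t - x t) ≤ δ →
        ∀ (h : ℝ → Fin n → ℝ) (hh : memX T h),
          |(∫ t in Set.Icc (0 : ℝ) T,
              (D₂F t (hist r y hy.1 t) (derivWithin y (Set.Icc 0 T) t) (hist r h hh.1 t) +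
               D₃F t (hist r y hy.1 t) (derivWithin y (Set.Icc 0 T) t)
                 (derivWithin h (Set.Icc 0 T) t))) -
            ∫ t in Set.Icc (0 : ℝ) T,
              (D₂F t (hist r x hx.1 t) (derivWithin x (Set.Icc 0 T) t) (hist r h hh.1 t) +
               D₃F t (hist r x hx.1 t) (derivWithin x (Set.Icc 0 T) t)
                 (derivWithin h (Set.Icc 0 T) t))| ≤ ε * Xnorm r T h) := by
  have hFderiv := hasFDerivAt_uncurry_coprod_of_continuousOn hD₂ hD₃ hD₂c hD₃c
  let DΦ t (p : C(Icc (-r) (0 : ℝ), Fin n → ℝ) × (Fin n → ℝ)) :=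
    (D₂F t p.1 p.2).coprod (D₃F t p.1 p.2)
  have hDΦ : ContinuousOn (fun q : ℝ × _ => DΦ q.1 q.2) (Icc 0 T ×ˢ univ) :=
    (ContinuousLinearMap.coprodEquivL ℝ).continuous.comp_continuousOn (hD₂c.prodMk hD₃c)
  refine ⟨fun x hx ε hε => ?_, fun x hx ε hε => ?_⟩
  · obtain ⟨δ, hδ, H⟩ := isCompact_Icc.exists_pos_norm_setIntegral_sub_sub_le (μ := volume) hF hFderiv hDΦ
      hx.continuousOn_histState hε
    refine ⟨δ, hδ, fun h hh hXh => ?_⟩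
    have hJ : Jfun r T F (fun t => x t + h t) (hx.1.add hh.1) =
        ∫ t in Icc 0 T, F t (histState r T x hx.1 t + histState r T h hh.1 t).1
          (histState r T x hx.1 t + histState r T h hh.1 t).2 :=
      setIntegral_congr_fun measurableSet_Icc fun t ht => by
        rw [← histState_add hx.1 hh.1 (hx.2.1 t ht) (hh.2.1 t ht)]; rfl
    rw [hJ, ← Real.norm_eq_abs]
    exact H _ hh.continuousOn_histState _ (Xnorm_nonneg h) hXh
      fun t ht => norm_histState_le_Xnorm hh ht
  · obtain ⟨δ, hδ, H⟩ := isCompact_Icc.exists_pos_norm_setIntegral_clm_apply_sub_le (μ := volume) hDΦ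
      hx.continuousOn_histState hε
    refine ⟨δ, hδ, fun y hy hyx h hh => ?_⟩
    rw [← Real.norm_eq_abs]
    refine H _ hy.continuousOn_histState (fun t ht => ?_) _ hh.continuousOn_histState _
      (Xnorm_nonneg h) fun t ht => norm_histState_le_Xnorm hh ht
    rw [← histState_sub hy.1 hx.1 (hy.2.1 t ht) (hx.2.1 t ht)]
    exact (norm_histState_le_Xnorm (hy.sub hx) ht).trans hyx

/-- Under (A1)-(A3), `J(x) = ∫_0^T F(t,x_t,x'(t)) dt` is of class `C¹` on `X`, with
`DJ(x)·h = ∫_0^T ( D₂F(t,x_t,x'(t))·h_t + D₃F(t,x_t,x'(t))·h'(t) ) dt` :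
`J` is Fréchet differentiable at each `x ∈ X` with this differential, and the
differential depends continuously on `x`. -/
theorem stmt_14 (r T : ℝ) (hr : 0 < r) (hrT : r < T) (n : ℕ)
    (F : ℝ → C(Set.Icc (-r) (0 : ℝ), Fin n → ℝ) → (Fin n → ℝ) → ℝ)
    -- (A1)
    (hF : ContinuousOn
      (fun p : ℝ × C(Set.Icc (-r) (0 : ℝ), Fin n → ℝ) × (Fin n → ℝ) => F p.1 p.2.1 p.2.2)
      (Set.Icc 0 T ×ˢ Set.univ))
    -- (A2)
    (D₂F : ℝ → C(Set.Icc (-r) (0 : ℝ), Fin n → ℝ) → (Fin n → ℝ) →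
      (C(Set.Icc (-r) (0 : ℝ), Fin n → ℝ) →L[ℝ] ℝ))
    (hD₂ : ∀ t ∈ Set.Icc (0 : ℝ) T, ∀ φ v, HasFDerivAt (fun ψ => F t ψ v) (D₂F t φ v) φ)
    (hD₂c : ContinuousOn
      (fun p : ℝ × C(Set.Icc (-r) (0 : ℝ), Fin n → ℝ) × (Fin n → ℝ) => D₂F p.1 p.2.1 p.2.2)
      (Set.Icc 0 T ×ˢ Set.univ))
    -- (A3)
    (D₃F : ℝ → C(Set.Icc (-r) (0 : ℝ), Fin n → ℝ) → (Fin n → ℝ) → ((Fin n → ℝ) →L[ℝ] ℝ))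
    (hD₃ : ∀ t ∈ Set.Icc (0 : ℝ) T, ∀ φ v, HasFDerivAt (fun w => F t φ w) (D₃F t φ v) v)
    (hD₃c : ContinuousOn
      (fun p : ℝ × C(Set.Icc (-r) (0 : ℝ), Fin n → ℝ) × (Fin n → ℝ) => D₃F p.1 p.2.1 p.2.2)
      (Set.Icc 0 T ×ˢ Set.univ)) :
    -- Fréchet differentiability of J at every x ∈ X, with the announced differential
    (∀ (x : ℝ → Fin n → ℝ) (hx : memX T x), ∀ ε > (0 : ℝ), ∃ δ > (0 : ℝ),
      ∀ (h : ℝ → Fin n → ℝ) (hh : memX T h), Xnorm r T h ≤ δ →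
        |Jfun r T F (fun t => x t + h t) (hx.1.add hh.1) - Jfun r T F x hx.1 -
          ∫ t in Set.Icc (0 : ℝ) T,
            (D₂F t (hist r x hx.1 t) (derivWithin x (Set.Icc 0 T) t) (hist r h hh.1 t) +
             D₃F t (hist r x hx.1 t) (derivWithin x (Set.Icc 0 T) t)
               (derivWithin h (Set.Icc 0 T) t))| ≤ ε * Xnorm r T h) ∧
    -- continuity of x ↦ DJ(x) in the operator norm sense
    (∀ (x : ℝ → Fin n → ℝ) (hx : memX T x), ∀ ε > (0 : ℝ), ∃ δ > (0 : ℝ),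
      ∀ (y : ℝ → Fin n → ℝ) (hy : memX T y), Xnorm r T (fun t => y t - x t) ≤ δ →
        ∀ (h : ℝ → Fin n → ℝ) (hh : memX T h),
          |(∫ t in Set.Icc (0 : ℝ) T,
              (D₂F t (hist r y hy.1 t) (derivWithin y (Set.Icc 0 T) t) (hist r h hh.1 t) +
               D₃F t (hist r y hy.1 t) (derivWithin y (Set.Icc 0 T) t)
                 (derivWithin h (Set.Icc 0 T) t))) -
            ∫ t in Set.Icc (0 : ℝ) T,
              (D₂F t (hist r x hx.1 t) (derivWithin x (Set.Icc 0 T) t) (hist r h hh.1 t) +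
               D₃F t (hist r x hx.1 t) (derivWithin x (Set.Icc 0 T) t)
                 (derivWithin h (Set.Icc 0 T) t))| ≤ ε * Xnorm r T h) :=
  stmt_14_general r T n F hF D₂F hD₂ hD₂c D₃F hD₃ hD₃c
end
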